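/- arXiv:1006.3984 — 2 statements merged into one kernel-verified Lean document; each statement's English description precedes it below -/
import Mathlib

section
/- For every l ≥ 1, the family { ρ̃₀(U) : U ∈ Y_l \ {[(z,…,z)]} } (where (z,…,z) is the all-z tuple of length l) is ℚ-linearly independent in H. -/
noncomputable section

open Finset

/-- Hoffman's algebra `H = ℚ⟨x,y⟩`, the noncommutative polynomial algebra
over `ℚ` in two indeterminates. -/
abbrev H : Type := FreeAlgebra ℚ (Fin 2)

/-- The indeterminate `x`. -/
def Hx : H := FreeAlgebra.ι ℚ 0

/-- The indeterminate `y`. -/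
def Hy : H := FreeAlgebra.ι ℚ 1

/-- `z = x + y`. -/
def Hz : H := Hx + Hy

/-- `z_k = x^(k-1) y`. -/
def zw (k : ℕ) : H := Hx ^ (k - 1) * Hy

/-- The monomial `z_{k 0} z_{k 1} ⋯ z_{k (l-1)}`. -/
def zwords {l : ℕ} (k : Fin l → ℕ) : H := (List.ofFn fun i => zw (k i)).prod

/-- The monomial `z_{k a} z_{k (a+1)} ⋯ z_{k (a+l-1)}`. -/
def zseq (k : ℕ → ℕ) (a l : ℕ) : H := ((List.range l).map fun t => zw (k (a + t))).prod

/-- `Ȟ¹`: the ℚ-span of the monomials `z_{k₁}⋯z_{k_l}` over tuples of positive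
integers not all equal to 1. -/
def Hcheck : Submodule ℚ H :=
  Submodule.span ℚ
    {w | ∃ (l : ℕ) (k : Fin (l + 1) → ℕ), (∀ i, 1 ≤ k i) ∧ (∃ i, k i ≠ 1) ∧ w = zwords k}

/-- `Ȟ¹_d`: the subspace of `Ȟ¹` spanned by the monomials of total degree `d`. -/
def HcheckDeg (d : ℕ) : Submodule ℚ H :=
  Submodule.span ℚ
    {w | ∃ (l : ℕ) (k : Fin (l + 1) → ℕ),
      (∀ i, 1 ≤ k i) ∧ (∃ i, k i ≠ 1) ∧ (∑ i, k i) = d ∧ w = zwords k}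

/-- `H⁰_d`: the span of the monomials `z_{k₁}⋯z_{k_l}` of total degree `d` with `k₁ ≥ 2`. -/
def H0Deg (d : ℕ) : Submodule ℚ H :=
  Submodule.span ℚ
    {w | ∃ (l : ℕ) (k : Fin (l + 1) → ℕ),
      (∀ i, 1 ≤ k i) ∧ 2 ≤ k 0 ∧ (∑ i, k i) = d ∧ w = zwords k}

/-- The multiplication map `M_n : H^{⊗(n+2)} → H`. -/
def Mn (n : ℕ) : TensorPower ℚ (n + 2) H →ₗ[ℚ] H :=
  PiTensorProduct.lift (MultilinearMap.mkPiAlgebraFin ℚ (n + 2) H)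

/-- The `H`-bimodule action `a ◇ t ◇ b` on `H^{⊗(n+2)}`:
`a ◇ (w₁⊗⋯⊗w_{n+2}) ◇ b = w₁b ⊗ w₂ ⊗ ⋯ ⊗ w_{n+1} ⊗ a w_{n+2}`. -/
def dia (n : ℕ) (a : H) (t : TensorPower ℚ (n + 2) H) (b : H) : TensorPower ℚ (n + 2) H :=
  PiTensorProduct.map
    (fun i => if i = 0 then LinearMap.mulRight ℚ b
      else if i = Fin.last (n + 1) then LinearMap.mulLeft ℚ a
      else LinearMap.id) t

/-- The pure tensor `x ⊗ z^{⊗n} ⊗ y ∈ H^{⊗(n+2)}`. -/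
def xzy (n : ℕ) : TensorPower ℚ (n + 2) H :=
  PiTensorProduct.tprod ℚ
    (fun i : Fin (n + 2) => if i = 0 then Hx else if i = Fin.last (n + 1) then Hy else Hz)

/-- The pure tensor `x ⊗ y^{⊗(n+1)} ∈ H^{⊗(n+2)}`. -/
def xyy (n : ℕ) : TensorPower ℚ (n + 2) H :=
  PiTensorProduct.tprod ℚ (fun i : Fin (n + 2) => if i = 0 then Hx else Hy)

/-- The defining properties of the family of maps `C_n : H → H^{⊗(n+2)}`. -/
def IsC (C : ∀ n : ℕ, H →ₗ[ℚ] TensorPower ℚ (n + 2) H) : Prop :=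
  ∀ n, C n 1 = 0 ∧ C n Hx = xzy n ∧ C n Hy = -xzy n ∧
    ∀ w w' : H, C n (w * w') = dia n 1 (C n w) w' + dia n w (C n w') 1

/-- `γ`: the algebra endomorphism of `H` with `γ(x) = x`, `γ(y) = x + y`
(it is an automorphism). -/
def gam : H →ₐ[ℚ] H := FreeAlgebra.lift ℚ ![Hx, Hz]

/-- `γ⁻¹`: the inverse automorphism of `γ`, having `γ⁻¹(x) = x`, `γ⁻¹(y) = y - x`. -/
def gamInv : H →ₐ[ℚ] H := FreeAlgebra.lift ℚ ![Hx, Hy - Hx]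

/-- The defining properties of the family of maps `C̄_n : H → H^{⊗(n+2)}`. -/
def IsCbar (C : ∀ n : ℕ, H →ₗ[ℚ] TensorPower ℚ (n + 2) H) : Prop :=
  ∀ n, C n 1 = 0 ∧ C n Hx = xyy n ∧ C n Hy = -xyy n ∧
    ∀ w w' : H, C n (w * w') = dia n 1 (C n w) (gamInv w') + dia n (gamInv w) (C n w') 1

/-- The value of `ρ` on the monomial `z_{k 0} ⋯ z_{k (l-1)}` (for `k` periodic of
period `l`):
`∑_{j<l} ∑_{i=1}^{k_j−1} z_{k_j−i+1} z_{k_{j+1}} ⋯ z_{k_{j+l−1}} z_i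
  − ∑_{j<l} z_{k_j+1} z_{k_{j+1}} ⋯ z_{k_{j+l−1}}`. -/
def rhoFormula (k : ℕ → ℕ) (l : ℕ) : H :=
  (∑ j ∈ Finset.range l, ∑ i ∈ Finset.Icc 1 (k j - 1),
      zw (k j - i + 1) * zseq k (j + 1) (l - 1) * zw i) -
    ∑ j ∈ Finset.range l, zw (k j + 1) * zseq k (j + 1) (l - 1)

/-- The defining property of the ℚ-linear map `ρ` on `Ȟ¹`: its values on the
monomials `z_{k₁}⋯z_{k_l}` (positive indices, not all 1). -/
def IsRho (rho : H →ₗ[ℚ] H) : Prop :=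
  ∀ (l : ℕ) (k : ℕ → ℕ), 1 ≤ l → (∀ j, k (j + l) = k j) → (∀ j, 1 ≤ k j) →
    (∃ j, k j ≠ 1) → rho (zseq k 0 l) = rhoFormula k l

/-- The defining property of the map `d` on `ℚ + Hy`: `d(1) = 1`, `d(wy) = γ(w)y`. -/
def IsD (dm : H →ₗ[ℚ] H) : Prop := dm 1 = 1 ∧ ∀ w : H, dm (w * Hy) = gam w * Hy

/-- The `n`-step Lucas numbers `L^n_m`: `L^n_m = 2^m − 1` for `m ≤ n`,
`L^n_m = L^n_{m−1} + ⋯ + L^n_{m−n}` for `m ≥ n+1`, and `L^0_m = 0`. -/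
def Lucas (n : ℕ) (m : ℕ) : ℕ :=
  if _hn : n = 0 then 0
  else if _hm : m ≤ n then 2 ^ m - 1
  else ∑ i ∈ (Finset.Icc 1 n).attach, Lucas n (m - i.1)
termination_by m
decreasing_by
  have h1 := (Finset.mem_Icc.mp i.2).1
  omega

/-- The multiple zeta value `ζ(k₁,…,k_l) = ∑_{n₁ > ⋯ > n_l ≥ 1} 1/(n₁^{k₁}⋯n_l^{k_l})`. -/
def mzeta {l : ℕ} (k : Fin l → ℕ) : ℝ :=
  ∑' n : {n : Fin l → ℕ // StrictAnti n ∧ ∀ i, 0 < n i}, ∏ i, ((n.1 i : ℝ) ^ k i)⁻¹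

/-- The multiple zeta-star value
`ζ*(k₁,…,k_l) = ∑_{n₁ ≥ ⋯ ≥ n_l ≥ 1} 1/(n₁^{k₁}⋯n_l^{k_l})`. -/
def mzetaStar {l : ℕ} (k : Fin l → ℕ) : ℝ :=
  ∑' n : {n : Fin l → ℕ // Antitone n ∧ ∀ i, 0 < n i}, ∏ i, ((n.1 i : ℝ) ^ k i)⁻¹

/-- The defining property of the map `Z : H⁰ → ℝ`. -/
def IsZ (Z : H →ₗ[ℚ] ℝ) : Prop :=
  Z 1 = 1 ∧ ∀ (l : ℕ) (k : Fin (l + 1) → ℕ), (∀ i, 1 ≤ k i) → 2 ≤ k 0 →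
    Z (zwords k) = mzeta k

/-- The defining property of the map `Z̄ : H⁰ → ℝ`. -/
def IsZbar (Z : H →ₗ[ℚ] ℝ) : Prop :=
  Z 1 = 1 ∧ ∀ (l : ℕ) (k : Fin (l + 1) → ℕ), (∀ i, 1 ≤ k i) → 2 ≤ k 0 →
    Z (zwords k) = mzetaStar k

/-- The defining property of the map `α : Hy → Hy`, dividing each monomial by
its depth. -/
def IsAlpha (am : H →ₗ[ℚ] H) : Prop :=
  ∀ (l : ℕ) (k : Fin (l + 1) → ℕ), (∀ i, 1 ≤ k i) →
    am (zwords k) = ((l : ℚ) + 1)⁻¹ • zwords k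

/-- Cyclic equivalence on tuples: `v` is a cyclic shift of `u`.  Here `Fin 2`
encodes the two symbols: `0 = y`, `1 = z`. -/
def cycRel (l : ℕ) (u v : Fin l → Fin 2) : Prop := ∃ j : Fin l, ∀ t, v t = u (t + j)

/-- `X_{l,n}`: tuples in `{y,z}^l` containing at least `n` cyclically consecutive `z`'s
(i.e. some cyclic shift begins with `z^n`).  `0 = y`, `1 = z`. -/
def Xln (l n : ℕ) : Set (Fin l → Fin 2) :=
  {u | ∃ j : Fin l, ∀ t : Fin l, (t : ℕ) < n → u (t + j) = 1}

/-- `Y_{l,n} = X_{l,n}/∼`, the set of cyclic equivalence classes in `X_{l,n}`. -/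
def Yln (l n : ℕ) : Type := Quot (fun u v : Xln l n => cycRel l u.1 v.1)

/-- The letters `y`, `z` of `{y,z}`-tuples, as elements of `H`: `0 ↦ y`, `1 ↦ z`. -/
def yz : Fin 2 → H := ![Hy, Hz]

/-- The product `u₁⋯u_l ∈ H` of a `{y,z}`-tuple. -/
def wprod {l : ℕ} (u : Fin l → Fin 2) : H := (List.ofFn fun t => yz (u t)).prod

/-!
By the Leibniz rule, and since `C₀(z) = 0`, `ρ₀(u₁⋯u_l)` is minus the sum of `x·u_{j+1}⋯u_l u₁⋯u_j`
over the positions `j` with `u_j = y`: `x` times the rotations of the word that end in `y`.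
Now `H` is also free on `y, z`, with `x = z - y`. Pick a rotation `V` of a representative of `U`
that ends in `y`; the coefficient of the `{y,z}`-monomial `zV` is nonzero on `ρ̃₀(U)` and vanishes
on `ρ̃₀(U')` for every other class `U'`, because `V` is not a rotation of any word of `U'`.
Such a diagonal family of linear functionals forces linear independence.
-/

theorem linearIndependent_of_diagonal_functionals {ι R M : Type*} [Ring R] [NoZeroDivisors R]
    [AddCommGroup M] [Module R M] {v : ι → M} (f : ι → M →ₗ[R] R)
    (hdiag : ∀ i, f i (v i) ≠ 0) (hoff : ∀ i j, j ≠ i → f i (v j) = 0) :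
    LinearIndependent R v := by
  rw [linearIndependent_iff']
  intro s c hsum i hi
  have hfi : f i (∑ j ∈ s, c j • v j) = c i * f i (v i) := by
    rw [map_sum, Finset.sum_eq_single_of_mem i hi fun j _ hji => by
      rw [map_smul, hoff i j hji, smul_zero]]
    rw [map_smul, smul_eq_mul]
  rw [hsum, map_zero] at hfi
  exact (mul_eq_zero.mp hfi.symm).resolve_right (hdiag i)

section Rotation

open Fin.NatCast

variable {l : ℕ} [NeZero l]

theorem List.rotate_ofFn {α : Type*} (u : Fin l → α) (r : ℕ) :
    (List.ofFn u).rotate r = List.ofFn (fun t => u (t + (r : Fin l))) := by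
  apply List.ext_getElem (by simp)
  intro n h1 h2
  simp only [List.getElem_rotate, List.getElem_ofFn, List.length_ofFn]
  congr 1
  ext
  simp [Fin.val_add, Fin.val_natCast]

theorem cycRel_of_rotate_ofFn_eq {u u' : Fin l → Fin 2} {r r' : ℕ}
    (h : (List.ofFn u').rotate r' = (List.ofFn u).rotate r) : cycRel l u u' := by
  rw [List.rotate_ofFn, List.rotate_ofFn, List.ofFn_inj] at h
  refine ⟨(r : Fin l) - (r' : Fin l), fun t => ?_⟩
  simpa [sub_add_eq_add_sub, add_sub_assoc] using congrFun h (t - (r' : Fin l))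

end Rotation

theorem dia_dia (n : ℕ) (a a' b b' : H) (t : TensorPower ℚ (n + 2) H) :
    dia n a (dia n a' t b') b = dia n (a * a') t (b' * b) := by
  unfold dia
  rw [← LinearMap.comp_apply, ← PiTensorProduct.map_comp]
  congr 2
  funext i
  by_cases h0 : i = 0
  · simp [h0, LinearMap.mulRight_mul]
  · by_cases hl : i = Fin.last (n + 1)
    · simp [hl, LinearMap.mulLeft_mul]
    · simp [h0, hl]

theorem dia_sum (n : ℕ) (a b : H) {ι : Type*} (s : Finset ι) (t : ι → TensorPower ℚ (n + 2) H) :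
    dia n a (∑ j ∈ s, t j) b = ∑ j ∈ s, dia n a (t j) b :=
  map_sum _ _ _

theorem dia_neg (n : ℕ) (a b : H) (t : TensorPower ℚ (n + 2) H) :
    dia n a (-t) b = -dia n a t b :=
  map_neg _ _

theorem map_list_prod_of_leibniz {n : ℕ} {α : Type*} (D : H → TensorPower ℚ (n + 2) H)
    (h1 : D 1 = 0) (hmul : ∀ w w', D (w * w') = dia n 1 (D w) w' + dia n w (D w') 1)
    (e : α → H) (L : List α) :
    D (L.map e).prod =
      ∑ j : Fin L.length,
        dia n ((L.take j).map e).prod (D (e L[j])) ((L.drop (j + 1)).map e).prod := by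
  induction L with
  | nil => simpa using h1
  | cons a L ih =>
    rw [List.map_cons, List.prod_cons, hmul, ih, dia_sum]
    refine Eq.trans ?_ (Fin.sum_univ_succ (n := L.length) _).symm
    simp [dia_dia]

def yzWord (L : List (Fin 2)) : H := (L.map yz).prod

theorem wprod_eq_yzWord {l : ℕ} (u : Fin l → Fin 2) : wprod u = yzWord (List.ofFn u) := by
  simp [wprod, yzWord, List.map_ofFn, Function.comp_def]

theorem yzWord_rotate_succ (L : List (Fin 2)) (j : Fin L.length) (hj : L[j] = 0) :
    yzWord (L.drop (j + 1)) * (yzWord (L.take j) * Hy) = yzWord (L.rotate (j + 1)) := by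
  rw [List.rotate_eq_drop_append_take j.2, ← List.take_concat_get' L j j.2,
    show L[(j : ℕ)] = 0 from hj]
  simp only [yzWord, List.map_append, List.prod_append, List.map_singleton, List.prod_singleton]
  rfl

theorem C_yz {C : ∀ n : ℕ, H →ₗ[ℚ] TensorPower ℚ (n + 2) H} (hC : IsC C) (a : Fin 2) :
    C 0 (yz a) = if a = 0 then -xzy 0 else 0 := by
  obtain ⟨-, hx, hy, -⟩ := hC 0
  fin_cases a
  · simpa [yz] using hy
  · simp [yz, Hz, hx, hy]

theorem Mn_dia_xzy (a b : H) : Mn 0 (dia 0 a (xzy 0) b) = Hx * b * (a * Hy) := by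
  rw [dia, xzy, PiTensorProduct.map_tprod, Mn, PiTensorProduct.lift.tprod,
    MultilinearMap.mkPiAlgebraFin_apply]
  simp [List.ofFn_succ, Fin.succ, show Fin.last (0 + 1) = (1 : Fin 2) from rfl]

/-- Only the letters `y` contribute, as `C₀(z) = C₀(x) + C₀(y) = 0`. -/
theorem rho0_yzWord {C : ∀ n : ℕ, H →ₗ[ℚ] TensorPower ℚ (n + 2) H} (hC : IsC C)
    (L : List (Fin 2)) :
    Mn 0 (C 0 (yzWord L)) =
      -∑ j : Fin L.length with L[j] = 0, Hx * yzWord (L.rotate (j + 1)) := by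
  obtain ⟨h1, -, -, hmul⟩ := hC 0
  rw [yzWord, map_list_prod_of_leibniz (C 0) h1 hmul, map_sum, Finset.sum_filter,
    ← Finset.sum_neg_distrib]
  refine Finset.sum_congr rfl fun j _ => ?_
  rw [C_yz hC]
  split_ifs with hj
  · rw [dia_neg, map_neg, Mn_dia_xzy, mul_assoc, ← yzWord_rotate_succ L j hj]
    rfl
  · simp [dia]

/-- Coordinates of `H` in the free generators `y = 0` and `z = 1` (so `x = z - y`). -/
def yzCoords : H →ₐ[ℚ] MonoidAlgebra ℚ (FreeMonoid (Fin 2)) :=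
  FreeAlgebra.lift ℚ ![MonoidAlgebra.of ℚ _ (.of 1) - MonoidAlgebra.of ℚ _ (.of 0),
    MonoidAlgebra.of ℚ _ (.of 0)]

theorem yzCoords_yzWord (L : List (Fin 2)) :
    yzCoords (yzWord L) = MonoidAlgebra.of ℚ _ (FreeMonoid.ofList L) := by
  induction L with
  | nil => simp [yzWord, MonoidAlgebra.one_def]
  | cons a L ih =>
    rw [yzWord, List.map_cons, List.prod_cons, ← yzWord, map_mul, ih, FreeMonoid.ofList_cons,
      map_mul]
    fin_cases a <;> simp [yz, Hy, Hz, Hx, yzCoords, FreeAlgebra.lift_ι_apply]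

def yzCoeff (m : FreeMonoid (Fin 2)) : H →ₗ[ℚ] ℚ :=
  Finsupp.lapply m ∘ₗ (MonoidAlgebra.coeffLinearEquiv ℚ).toLinearMap ∘ₗ yzCoords.toLinearMap

theorem yzCoeff_x_mul_yzWord (V W : List (Fin 2)) :
    yzCoeff (.ofList (1 :: V)) (Hx * yzWord W) = if W = V then 1 else 0 := by
  classical
  have hx : yzCoords Hx = MonoidAlgebra.of ℚ _ (.of 1) - MonoidAlgebra.of ℚ _ (.of 0) := by
    simp [yzCoords, Hx, FreeAlgebra.lift_ι_apply]
  have hcoords : yzCoords (Hx * yzWord W) =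
      MonoidAlgebra.single (.ofList (1 :: W)) 1 - MonoidAlgebra.single (.ofList (0 :: W)) 1 := by
    rw [map_mul, hx, yzCoords_yzWord, sub_mul, ← map_mul, ← map_mul]
    rfl
  change (yzCoords (Hx * yzWord W)).coeff _ = _
  rw [hcoords, MonoidAlgebra.coeff_sub, MonoidAlgebra.coeff_single, MonoidAlgebra.coeff_single,
    Finsupp.sub_apply, Finsupp.single_apply, Finsupp.single_apply,
    FreeMonoid.ofList.injective.eq_iff, FreeMonoid.ofList.injective.eq_iff]
  simp

theorem yzCoeff_rho0_yzWord {C : ∀ n : ℕ, H →ₗ[ℚ] TensorPower ℚ (n + 2) H} (hC : IsC C)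
    (L V : List (Fin 2)) :
    yzCoeff (.ofList (1 :: V)) (Mn 0 (C 0 (yzWord L))) =
      -#{j : Fin L.length | L[j] = 0 ∧ L.rotate (j + 1) = V} := by
  rw [rho0_yzWord hC, map_neg, map_sum]
  simp only [yzCoeff_x_mul_yzWord, Finset.sum_boole, Finset.filter_filter]

theorem yzCoeff_rho0_wprod_self {C : ∀ n : ℕ, H →ₗ[ℚ] TensorPower ℚ (n + 2) H} (hC : IsC C)
    {l : ℕ} (u : Fin l → Fin 2) (j : Fin l) (hj : u j = 0) :
    yzCoeff (.ofList (1 :: (List.ofFn u).rotate (j + 1))) (Mn 0 (C 0 (wprod u))) ≠ 0 := by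
  rw [wprod_eq_yzWord, yzCoeff_rho0_yzWord hC, neg_ne_zero, Nat.cast_ne_zero, Finset.card_ne_zero]
  exact ⟨Fin.cast (List.length_ofFn).symm j, by simpa using hj⟩

theorem yzCoeff_rho0_wprod_of_not_cycRel {C : ∀ n : ℕ, H →ₗ[ℚ] TensorPower ℚ (n + 2) H}
    (hC : IsC C) {l : ℕ} [NeZero l] {u u' : Fin l → Fin 2} (h : ¬ cycRel l u u') (r : ℕ) :
    yzCoeff (.ofList (1 :: (List.ofFn u).rotate r)) (Mn 0 (C 0 (wprod u'))) = 0 := by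
  rw [wprod_eq_yzWord, yzCoeff_rho0_yzWord hC, neg_eq_zero, Nat.cast_eq_zero, Finset.card_eq_zero,
    Finset.filter_eq_empty_iff]
  exact fun j _ hj => h (cycRel_of_rotate_ofFn_eq hj.2)

theorem exists_eq_zero_of_ne_mk_one {l : ℕ} {U : Quot (cycRel l)}
    (hU : U ≠ Quot.mk (cycRel l) (fun _ => 1)) : ∃ j, U.out j = 0 := by
  by_contra! h
  exact hU (by rw [← U.out_eq]; congr; funext j; exact Fin.eq_one_of_ne_zero _ (h j))

theorem rho0_classes_linearIndependent_general (l : ℕ)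
    (C : ∀ n : ℕ, H →ₗ[ℚ] TensorPower ℚ (n + 2) H) (hC : IsC C) :
    LinearIndependent ℚ
      (fun U : {U : Quot (cycRel l) // U ≠ Quot.mk (cycRel l) (fun _ => 1)} =>
        Mn 0 (C 0 (wprod (Quot.out U.1)))) := by
  choose j hj using fun U : {U : Quot (cycRel l) // U ≠ Quot.mk (cycRel l) (fun _ => 1)} =>
    exists_eq_zero_of_ne_mk_one U.2
  refine linearIndependent_of_diagonal_functionals
    (fun U => yzCoeff (.ofList (1 :: (List.ofFn U.1.out).rotate (j U + 1))))
    (fun U => yzCoeff_rho0_wprod_self hC _ (j U) (hj U)) fun U U' hne => ?_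
  have : NeZero l := NeZero.of_pos (j U).pos
  refine yzCoeff_rho0_wprod_of_not_cycRel hC (fun hcyc => hne ?_) _
  exact Subtype.ext (by rw [← U.1.out_eq, ← U'.1.out_eq]; exact (Quot.sound hcyc).symm)

/-- The family `{ρ̃₀(U) : U ∈ Y_l \ {[(z,…,z)]}}` is ℚ-linearly independent in `H`.
Here `Y_l = Quot (cycRel l)` is the set of cyclic equivalence classes of
`{y,z}^l` (`0 ↦ y`, `1 ↦ z`), the all-`z` class is `[(1,…,1)]`, and
`ρ̃₀(U) = ρ₀(u₁⋯u_l)` for any representative `(u₁,…,u_l)` of `U`. -/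
theorem rho0_classes_linearIndependent (l : ℕ) (hl : 1 ≤ l)
    (C : ∀ n : ℕ, H →ₗ[ℚ] TensorPower ℚ (n + 2) H) (hC : IsC C) :
    LinearIndependent ℚ
      (fun U : {U : Quot (cycRel l) // U ≠ Quot.mk (cycRel l) (fun _ => 1)} =>
        Mn 0 (C 0 (wprod (Quot.out U.1)))) :=
  rho0_classes_linearIndependent_general l C hC
end
end

section
/- Let l ≥ 1 and let k₁,…,k_l be positive integers, with indices of k_j read modulo l. Then ∑_{j=1}^{l} (ρ̄₀ ∘ α ∘ d)(z_{k_j} z_{k_{j+1}} ⋯ z_{k_{j+l−1}}) = ∑_{j=1}^{l} ∑_{i=1}^{k_j−1} z_{k_j−i+1} z_{k_{j+1}} ⋯ z_{k_{j+l−1}} z_i − (k₁ + ⋯ + k_l) · z_{k₁+⋯+k_l+1}, as an identity in H. -/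
noncomputable section

open Finset

/-!
Writing `z = x + y`, `d(z_{k_j} ⋯ z_{k_{j+l-1}}) = γ(z_{k_j} ⋯ z_{k_{j+l-2}}) z_{k_{j+l-1}}`
expands into the words `x^{k_j-1} u_j ⋯ x^{k_{j+l-1}-1} u_{j+l-1}` with letters `u_i ∈ {x, y}`
and last letter `y`. Such a word has depth `|S|`, where `S` is the set of positions (mod `l`)
carrying `y`, and since `ρ̄₀(uv) = ρ̄₀(vu)` its image under `ρ̄₀` depends only on `S`, not on the
starting point `j`. A nonempty `S` arises from exactly `|S|` starting points, which cancels the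
factor `1/|S|` from `α`, so the left side is `ρ̄₀` of the sum over all nonempty `S`, that is
`ρ̄₀(γ(z_{k_1} ⋯ z_{k_l})) - ρ̄₀(x^{k_1+⋯+k_l})`. Both terms follow from the derivation rule of
`C̄₀`: `ρ̄₀(x^N) = N z_{N+1}`, and expanding `ρ̄₀(γ(z_{k_1} ⋯ z_{k_l}))` factor by factor gives
the double sum, because `C̄₀(z) = 0` and `γ⁻¹(x^e z) = z_{e+1}`.
-/

lemma dia_add (n : ℕ) (a b : H) (t t' : TensorPower ℚ (n + 2) H) :
    dia n a (t + t') b = dia n a t b + dia n a t' b :=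
  map_add _ t t'

lemma dia_smul (n : ℕ) (a b : H) (r : ℚ) (t : TensorPower ℚ (n + 2) H) :
    dia n a (r • t) b = r • dia n a t b :=
  map_smul _ r t

lemma dia_zero (n : ℕ) (a b : H) : dia n a 0 b = 0 :=
  map_zero _

lemma dia_one_one (n : ℕ) (t : TensorPower ℚ (n + 2) H) : dia n 1 t 1 = t := by
  have : (fun i : Fin (n + 2) => if i = 0 then LinearMap.mulRight ℚ (1 : H)
      else if i = Fin.last (n + 1) then LinearMap.mulLeft ℚ (1 : H) else LinearMap.id) =
      fun _ => LinearMap.id := by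
    funext i
    split_ifs <;> ext <;> simp
  rw [dia, this, PiTensorProduct.map_id, LinearMap.id_apply]

lemma dia_zero_tprod (a b : H) (f : Fin 2 → H) :
    dia 0 a (PiTensorProduct.tprod ℚ f) b = PiTensorProduct.tprod ℚ ![f 0 * b, a * f 1] := by
  rw [dia, PiTensorProduct.map_tprod]
  congr 1
  funext i
  fin_cases i <;> simp [Fin.last]

lemma Mn_zero_tprod (f : Fin 2 → H) : Mn 0 (PiTensorProduct.tprod ℚ f) = f 0 * f 1 := by
  simp [Mn, MultilinearMap.mkPiAlgebraFin_apply, List.ofFn_succ]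

lemma Mn_zero_dia_dia (a b c : H) (t : TensorPower ℚ 2 H) :
    Mn 0 (dia 0 1 (dia 0 a t b) c) = Mn 0 (dia 0 1 t (b * c * a)) := by
  induction t using PiTensorProduct.induction_on with
  | smul_tprod r f => simp [dia_smul, dia_zero_tprod, Mn_zero_tprod, mul_assoc]
  | add t t' ht ht' => rw [dia_add, dia_add, dia_add, map_add, map_add, ht, ht']

lemma gam_x : gam Hx = Hx := by simp [gam, Hx]
lemma gam_y : gam Hy = Hz := by simp [gam, Hy]
lemma gamInv_x : gamInv Hx = Hx := by simp [gamInv, Hx]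
lemma gamInv_y : gamInv Hy = Hy - Hx := by simp [gamInv, Hy]
lemma gamInv_z : gamInv Hz = Hy := by rw [Hz, map_add, gamInv_x, gamInv_y, add_sub_cancel]

lemma gamInv_gam (w : H) : gamInv (gam w) = w := by
  suffices gamInv.comp gam = AlgHom.id ℚ H from congrArg (· w) this
  refine FreeAlgebra.hom_ext (funext fun i => ?_)
  fin_cases i
  · change gamInv (gam Hx) = Hx
    rw [gam_x, gamInv_x]
  · change gamInv (gam Hy) = Hy
    rw [gam_y, gamInv_z]

lemma zseq_zero (k : ℕ → ℕ) (a : ℕ) : zseq k a 0 = 1 := rfl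

lemma zseq_succ (k : ℕ → ℕ) (a m : ℕ) : zseq k a (m + 1) = zseq k a m * zw (k (a + m)) :=
  List.prod_range_succ _ m

lemma zseq_add (k : ℕ → ℕ) (a m n : ℕ) : zseq k a (m + n) = zseq k a m * zseq k (a + m) n := by
  simp only [zseq, List.range_add, List.map_append, List.prod_append, List.map_map,
    Function.comp_def, add_assoc]

lemma zseq_add_period (k : ℕ → ℕ) {l : ℕ} (hper : ∀ j, k (j + l) = k j) (a m : ℕ) :
    zseq k (a + l) m = zseq k a m := by
  simp only [zseq, add_right_comm a l, hper]

def rhobar (Cb : ∀ n : ℕ, H →ₗ[ℚ] TensorPower ℚ (n + 2) H) : H →ₗ[ℚ] H := Mn 0 ∘ₗ Cb 0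

/-- `ρ̄₀` with `c` inserted between the two tensor factors: `w₁ ⊗ w₂ ↦ w₁ c w₂`. -/
def rhobarIns (Cb : ∀ n : ℕ, H →ₗ[ℚ] TensorPower ℚ (n + 2) H) (w c : H) : H :=
  Mn 0 (dia 0 1 (Cb 0 w) c)

section Rhobar

variable {Cb : ∀ n : ℕ, H →ₗ[ℚ] TensorPower ℚ (n + 2) H} (hCb : IsCbar Cb)
include hCb

omit hCb in
lemma rhobar_eq_rhobarIns (w : H) : rhobar Cb w = rhobarIns Cb w 1 := by
  rw [rhobarIns, dia_one_one]; rfl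

lemma rhobarIns_mul (w w' c : H) :
    rhobarIns Cb (w * w') c = rhobarIns Cb w (gamInv w' * c) + rhobarIns Cb w' (c * gamInv w) := by
  rw [rhobarIns, (hCb 0).2.2.2, dia_add, map_add, Mn_zero_dia_dia, Mn_zero_dia_dia, mul_one,
    one_mul, rhobarIns, rhobarIns]

lemma rhobarIns_one (c : H) : rhobarIns Cb 1 c = 0 := by
  rw [rhobarIns, (hCb 0).1, dia_zero, map_zero]

lemma rhobarIns_x (c : H) : rhobarIns Cb Hx c = Hx * c * Hy := by
  rw [rhobarIns, (hCb 0).2.1, xyy, dia_zero_tprod, Mn_zero_tprod]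
  simp

lemma rhobarIns_z (c : H) : rhobarIns Cb Hz c = 0 := by
  rw [rhobarIns, Hz, map_add, (hCb 0).2.1, (hCb 0).2.2.1, add_neg_cancel, dia_zero, map_zero]

lemma rhobar_mul_comm (u v : H) : rhobar Cb (u * v) = rhobar Cb (v * u) := by
  rw [rhobar_eq_rhobarIns, rhobar_eq_rhobarIns, rhobarIns_mul hCb, rhobarIns_mul hCb, mul_one,
    one_mul, mul_one, one_mul, add_comm]

lemma rhobarIns_x_pow (e : ℕ) (c : H) :
    rhobarIns Cb (Hx ^ e) c = ∑ i ∈ range e, Hx ^ (e - i) * c * Hx ^ i * Hy := by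
  induction e generalizing c with
  | zero => rw [pow_zero, rhobarIns_one hCb, range_zero, sum_empty]
  | succ e ih =>
    rw [pow_succ', rhobarIns_mul hCb, map_pow, gamInv_x, rhobarIns_x hCb, ih, sum_range_succ',
      add_comm]
    congr 1
    · refine sum_congr rfl fun i _ => ?_
      rw [Nat.add_sub_add_right, pow_succ']
      simp only [mul_assoc]
    · rw [Nat.sub_zero, pow_zero, mul_one, pow_succ']
      simp only [mul_assoc]

lemma rhobar_x_pow (N : ℕ) : rhobar Cb (Hx ^ N) = N • zw (N + 1) := by
  have hterm : ∀ i ∈ range N, Hx ^ (N - i) * 1 * Hx ^ i * Hy = zw (N + 1) := fun i hi => by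
    rw [mul_one, ← pow_add, Nat.sub_add_cancel (mem_range.mp hi).le, zw, Nat.add_sub_cancel]
  rw [rhobar_eq_rhobarIns, rhobarIns_x_pow hCb, sum_congr rfl hterm, sum_const, card_range]

lemma rhobarIns_gam_zw (e : ℕ) (c : H) :
    rhobarIns Cb (gam (zw e)) c = ∑ i ∈ Icc 1 (e - 1), zw (e - i + 1) * c * zw i := by
  rw [zw, map_mul, map_pow, gam_x, gam_y, rhobarIns_mul hCb, gamInv_z, rhobarIns_z hCb, add_zero,
    rhobarIns_x_pow hCb, ← Ico_add_one_right_eq_Icc, sum_Ico_eq_sum_range, Nat.add_sub_cancel]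
  refine sum_congr rfl fun i hi => ?_
  have hi := mem_range.mp hi
  rw [zw, zw, show e - (1 + i) + 1 - 1 = e - 1 - i by omega, Nat.add_sub_cancel_left]
  simp only [mul_assoc]

lemma rhobarIns_gam_zseq (k : ℕ → ℕ) (a m : ℕ) (c : H) :
    rhobarIns Cb (gam (zseq k a m)) c =
      ∑ j ∈ range m, rhobarIns Cb (gam (zw (k (a + j))))
        (zseq k (a + j + 1) (m - 1 - j) * c * zseq k a j) := by
  induction m generalizing c with
  | zero => rw [zseq_zero, map_one, rhobarIns_one hCb, range_zero, sum_empty]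
  | succ m ih =>
    rw [zseq_succ, map_mul, rhobarIns_mul hCb, gamInv_gam, gamInv_gam, ih, sum_range_succ,
      Nat.add_sub_cancel, Nat.sub_self, zseq_zero, one_mul]
    congr 1
    refine sum_congr rfl fun j hj => ?_
    have hj := mem_range.mp hj
    rw [show m - j = m - 1 - j + 1 by omega, zseq_succ,
      show a + j + 1 + (m - 1 - j) = a + m by omega]
    simp only [mul_assoc]

lemma rhobar_gam_zseq (k : ℕ → ℕ) {l : ℕ} (hper : ∀ j, k (j + l) = k j) :
    rhobar Cb (gam (zseq k 0 l)) =
      ∑ j ∈ range l, ∑ i ∈ Icc 1 (k j - 1), zw (k j - i + 1) * zseq k (j + 1) (l - 1) * zw i := by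
  rw [rhobar_eq_rhobarIns, rhobarIns_gam_zseq hCb]
  refine sum_congr rfl fun j hj => ?_
  have hj := mem_range.mp hj
  have hwrap : j + 1 + (l - 1 - j) = 0 + l := by omega
  rw [rhobarIns_gam_zw hCb, mul_one, zero_add, ← zseq_add_period k hper 0 j, ← hwrap, ← zseq_add,
    Nat.sub_add_cancel (by omega : j ≤ l - 1)]

lemma rhobar_prod_range_shift {l : ℕ} (f : ℕ → H) (hf : ∀ n, f (n + l) = f n) (a : ℕ) :
    rhobar Cb ((List.range l).map fun t => f (a + t)).prod =
      rhobar Cb ((List.range l).map f).prod := by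
  induction a with
  | zero => simp only [zero_add]
  | succ a ih =>
    rw [← ih]
    cases l with
    | zero => rfl
    | succ m =>
      rw [List.prod_range_succ, List.prod_range_succ', rhobar_mul_comm hCb,
        show a + 1 + m = a + (m + 1) by omega, hf, add_zero]
      simp only [Nat.succ_eq_add_one, add_right_comm, add_assoc]

end Rhobar

lemma prod_map_add_eq_sum_powerset {R ι : Type*} [Semiring R] [DecidableEq ι]
    (A B : ℕ → R) (g : ℕ → ι) {m : ℕ} (hg : Set.InjOn g (range m)) :
    ((List.range m).map fun t => A t + B t).prod =
      ∑ S ∈ ((range m).image g).powerset,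
        ((List.range m).map fun t => if g t ∈ S then B t else A t).prod := by
  induction m with
  | zero => simp
  | succ m ih =>
    have hm : g m ∉ (range m).image g := fun h => by
      obtain ⟨t, ht, hgt⟩ := mem_image.mp h
      exact (mem_range.mp ht).ne
        (hg (by simp [(mem_range.mp ht).trans (Nat.lt_succ_self m)]) (by simp) hgt)
    rw [List.prod_range_succ, ih (hg.mono (by simp)), range_add_one, image_insert,
      sum_powerset_insert hm, mul_add, sum_mul, sum_mul]
    congr 1 <;> refine sum_congr rfl fun S hS => ?_ <;> rw [List.prod_range_succ]
    · rw [if_neg fun h => hm (mem_powerset.mp hS h)]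
    · rw [if_pos (mem_insert_self _ _)]
      congr 2
      refine List.map_congr_left fun t ht => ?_
      have ht := List.mem_range.mp ht
      have hne : g t ≠ g m := fun h =>
        ht.ne (hg (by simp [ht.trans (Nat.lt_succ_self m)]) (by simp) h)
      simp only [mem_insert, hne, false_or]

lemma Finset.sum_powerset_erase_insert {ι M : Type*} [Fintype ι] [DecidableEq ι]
    [AddCommMonoid M] (p : ι) (f : Finset ι → M) :
    ∑ S ∈ (univ.erase p).powerset, f (insert p S) = ∑ S, if p ∈ S then f S else 0 := by
  conv_rhs => rw [← powerset_univ, ← insert_erase (mem_univ p),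
    sum_powerset_insert (notMem_erase p univ)]
  rw [sum_eq_zero fun S hS => if_neg fun h => notMem_erase p univ (mem_powerset.mp hS h),
    zero_add]
  exact sum_congr rfl fun S _ => (if_pos (mem_insert_self p S)).symm

lemma ZMod.natCast_add_injOn (l a : ℕ) :
    Set.InjOn (fun t : ℕ => ((a + t : ℕ) : ZMod l)) (range l) := by
  intro t ht s hs h
  simp only [Nat.cast_add, add_right_inj, ZMod.natCast_eq_natCast_iff'] at h
  rwa [Nat.mod_eq_of_lt (mem_range.mp ht), Nat.mod_eq_of_lt (mem_range.mp hs)] at h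

section NatCastZMod

variable {l : ℕ} [NeZero l]

lemma ZMod.image_natCast_add_range (a : ℕ) :
    (range l).image (fun t : ℕ => ((a + t : ℕ) : ZMod l)) = univ :=
  eq_univ_of_card _ <| by
    rw [card_image_of_injOn (ZMod.natCast_add_injOn l a), card_range, ZMod.card]

lemma ZMod.image_natCast_add_range_pred (a : ℕ) :
    (range (l - 1)).image (fun t : ℕ => ((a + t : ℕ) : ZMod l)) =
      univ.erase ((a + (l - 1) : ℕ) : ZMod l) := by
  have hl : l - 1 + 1 = l := Nat.sub_add_cancel (NeZero.one_le)
  have h := ZMod.image_natCast_add_range (l := l) a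
  have hrange : range l = insert (l - 1) (range (l - 1)) := by rw [← range_add_one, hl]
  rw [hrange, image_insert] at h
  rw [← h, erase_insert]
  intro hmem
  obtain ⟨t, ht, he⟩ := mem_image.mp hmem
  have ht := mem_range.mp ht
  exact ht.ne (ZMod.natCast_add_injOn l a (by simp; omega) (by simp; omega) he)

lemma ZMod.card_filter_natCast_add_mem (a : ℕ) (S : Finset (ZMod l)) :
    ((range l).filter fun t => ((a + t : ℕ) : ZMod l) ∈ S).card = S.card := by
  rw [← card_image_of_injOn ((ZMod.natCast_add_injOn l a).mono (filter_subset _ _)),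
    ← filter_image (p := (· ∈ S)), ZMod.image_natCast_add_range, filter_univ_mem]

end NatCastZMod

lemma prod_map_pow_eq_pow_sum {M : Type*} [Monoid M] (x : M) (e : ℕ → ℕ) (m : ℕ) :
    ((List.range m).map fun t => x ^ e t).prod = x ^ ∑ t ∈ range m, e t := by
  induction m with
  | zero => simp
  | succ m ih => rw [List.prod_range_succ, ih, sum_range_succ, pow_add]

def cycBlock (k : ℕ → ℕ) {l : ℕ} (S : Finset (ZMod l)) (n : ℕ) : H :=
  Hx ^ (k n - 1) * if (n : ZMod l) ∈ S then Hy else Hx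

/-- The term of `γ(z_{k_a} ⋯ z_{k_{a+l-1}}) = ∏ x^{k_n - 1} (x + y)` that takes `y` exactly at the
positions `n` with `n mod l ∈ S`. -/
def cycWord (k : ℕ → ℕ) {l : ℕ} (S : Finset (ZMod l)) (a : ℕ) : H :=
  ((List.range l).map fun t => cycBlock k S (a + t)).prod

section CycWord

variable (k : ℕ → ℕ) {l : ℕ}

lemma cycBlock_add_period (hper : ∀ j, k (j + l) = k j) (S : Finset (ZMod l)) (n : ℕ) :
    cycBlock k S (n + l) = cycBlock k S n := by
  simp only [cycBlock, hper, Nat.cast_add, ZMod.natCast_self, add_zero]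

lemma cycWord_eq_mul_last (hl : 1 ≤ l) (S : Finset (ZMod l)) (a : ℕ) :
    cycWord k S a =
      ((List.range (l - 1)).map fun t => cycBlock k S (a + t)).prod *
        cycBlock k S (a + (l - 1)) := by
  have hrange : List.range l = List.range (l - 1 + 1) := by rw [Nat.sub_add_cancel hl]
  rw [cycWord, hrange, List.prod_range_succ]

lemma gam_zseq (a m : ℕ) :
    gam (zseq k a m) =
      ((List.range m).map fun t => Hx ^ (k (a + t) - 1) * Hx + Hx ^ (k (a + t) - 1) * Hy).prod := by
  simp only [zseq, map_list_prod, List.map_map, Function.comp_def, zw, map_mul, map_pow, gam_x,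
    gam_y, Hz, mul_add]

lemma gam_zseq_eq_sum_cycWord [NeZero l] (a : ℕ) :
    gam (zseq k a l) = ∑ S : Finset (ZMod l), cycWord k S a := by
  rw [gam_zseq, prod_map_add_eq_sum_powerset _ _ _ (ZMod.natCast_add_injOn l a),
    ZMod.image_natCast_add_range, powerset_univ]
  simp only [cycWord, cycBlock, mul_ite]

lemma dm_zseq_eq_sum_cycWord (dm : H →ₗ[ℚ] H) (hd : IsD dm) [NeZero l] (a : ℕ) :
    dm (zseq k a l) =
      ∑ S : Finset (ZMod l), if ((a + (l - 1) : ℕ) : ZMod l) ∈ S then cycWord k S a else 0 := by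
  have hl : 1 ≤ l := NeZero.one_le
  have hsplit : zseq k a l = zseq k a (l - 1) * Hx ^ (k (a + (l - 1)) - 1) * Hy := by
    rw [mul_assoc, ← zw, ← zseq_succ, Nat.sub_add_cancel hl]
  rw [hsplit, hd.2, map_mul, map_pow, gam_x, gam_zseq,
    prod_map_add_eq_sum_powerset _ _ _ ((ZMod.natCast_add_injOn l a).mono (by simp)),
    ZMod.image_natCast_add_range_pred, sum_mul, sum_mul, ← sum_powerset_erase_insert]
  refine sum_congr rfl fun S _ => ?_
  rw [cycWord_eq_mul_last k hl, cycBlock, if_pos (mem_insert_self _ _), ← mul_assoc]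
  congr 3
  refine List.map_congr_left fun t ht => ?_
  have ht := List.mem_range.mp ht
  have hne : ((a + t : ℕ) : ZMod l) ≠ ((a + (l - 1) : ℕ) : ZMod l) := fun h =>
    ht.ne (ZMod.natCast_add_injOn l a (by simp; omega) (by simp; omega) h)
  simp only [cycBlock, mul_ite, mem_insert, hne, false_or]

lemma cycWord_empty (hpos : ∀ j, 1 ≤ k j) (a : ℕ) :
    cycWord k (∅ : Finset (ZMod l)) a = Hx ^ ∑ t ∈ range l, k (a + t) := by
  have hblock : ∀ n, cycBlock k (∅ : Finset (ZMod l)) n = Hx ^ k n := fun n => by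
    rw [cycBlock, if_neg (notMem_empty _), ← pow_succ, Nat.sub_add_cancel (hpos n)]
  simp only [cycWord, hblock, prod_map_pow_eq_pow_sum]

end CycWord

def IsZMonomial (n : ℕ) (w : H) : Prop := ∃ c : Fin n → ℕ, (∀ i, 1 ≤ c i) ∧ zwords c = w

namespace IsZMonomial

variable {n : ℕ} {w : H}

lemma one : IsZMonomial 0 1 := ⟨Fin.elim0, fun i => i.elim0, rfl⟩

lemma y_mul (h : IsZMonomial n w) : IsZMonomial (n + 1) (Hy * w) := by
  obtain ⟨c, hc, rfl⟩ := h
  refine ⟨Fin.cons 1 c, Fin.cases le_rfl hc, ?_⟩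
  simp [zwords, List.ofFn_succ, zw]

lemma x_mul (h : IsZMonomial n w) (hn : n ≠ 0) : IsZMonomial n (Hx * w) := by
  obtain ⟨n, rfl⟩ := Nat.exists_eq_succ_of_ne_zero hn
  obtain ⟨c, hc, rfl⟩ := h
  refine ⟨Fin.cons (c 0 + 1) (Fin.tail c), Fin.cases (Nat.le_add_left _ _) fun i => hc _, ?_⟩
  simp only [zwords, List.ofFn_succ, List.prod_cons, Fin.cons_zero, Fin.cons_succ, Fin.tail, zw,
    Nat.add_sub_cancel, ← mul_assoc, ← pow_succ', Nat.sub_add_cancel (hc 0)]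

lemma x_pow_mul (h : IsZMonomial n w) (hn : n ≠ 0) (e : ℕ) : IsZMonomial n (Hx ^ e * w) := by
  induction e with
  | zero => rwa [pow_zero, one_mul]
  | succ e ih => rw [pow_succ', mul_assoc]; exact ih.x_mul hn

lemma cycBlock_mul (h : IsZMonomial n w) (hn : n ≠ 0) (k : ℕ → ℕ) {l : ℕ} (S : Finset (ZMod l))
    (m : ℕ) : IsZMonomial (n + if (m : ZMod l) ∈ S then 1 else 0) (cycBlock k S m * w) := by
  rw [cycBlock, mul_assoc]
  split_ifs
  · exact h.y_mul.x_pow_mul n.succ_ne_zero _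
  · exact (h.x_mul hn).x_pow_mul hn _

lemma list_prod_cycBlock_mul (h : IsZMonomial n w) (hn : n ≠ 0) (k : ℕ → ℕ) {l : ℕ}
    (S : Finset (ZMod l)) (a m : ℕ) :
    IsZMonomial (n + ∑ t ∈ range m, if ((a + t : ℕ) : ZMod l) ∈ S then 1 else 0)
      (((List.range m).map fun t => cycBlock k S (a + t)).prod * w) := by
  induction m generalizing n w with
  | zero => simpa using h
  | succ m ih =>
    rw [List.prod_range_succ, mul_assoc, sum_range_succ, add_comm _ (ite _ _ _), ← add_assoc]
    exact ih (h.cycBlock_mul hn k S (a + m)) (by omega)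

end IsZMonomial

lemma isZMonomial_cycWord (k : ℕ → ℕ) {l : ℕ} [NeZero l] {S : Finset (ZMod l)} {a : ℕ}
    (hS : ((a + (l - 1) : ℕ) : ZMod l) ∈ S) : IsZMonomial S.card (cycWord k S a) := by
  have hl : 1 ≤ l := NeZero.one_le
  have hlast : IsZMonomial 1 (cycBlock k S (a + (l - 1))) := by
    rw [cycBlock, if_pos hS, ← mul_one Hy]
    exact IsZMonomial.one.y_mul.x_pow_mul one_ne_zero _
  have hcard : S.card = 1 + ∑ t ∈ range (l - 1), if ((a + t : ℕ) : ZMod l) ∈ S then 1 else 0 := by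
    have hrange : range l = range (l - 1 + 1) := by rw [Nat.sub_add_cancel hl]
    rw [← ZMod.card_filter_natCast_add_mem a S, card_filter, hrange, sum_range_succ, if_pos hS,
      add_comm]
  rw [hcard, cycWord_eq_mul_last k hl]
  exact hlast.list_prod_cycBlock_mul one_ne_zero k S a (l - 1)

lemma IsAlpha.apply_of_isZMonomial {am : H →ₗ[ℚ] H} (ha : IsAlpha am) {n : ℕ} {w : H}
    (h : IsZMonomial n w) (hn : n ≠ 0) : am w = (n : ℚ)⁻¹ • w := by
  obtain ⟨n, rfl⟩ := Nat.exists_eq_succ_of_ne_zero hn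
  obtain ⟨c, hc, rfl⟩ := h
  rw [ha n c hc, Nat.cast_succ]

section Main

variable {Cb : ∀ n : ℕ, H →ₗ[ℚ] TensorPower ℚ (n + 2) H} (hCb : IsCbar Cb)
  {am : H →ₗ[ℚ] H} (ha : IsAlpha am) {dm : H →ₗ[ℚ] H} (hd : IsD dm)
  {k : ℕ → ℕ} {l : ℕ} (hper : ∀ j, k (j + l) = k j)
include hCb hper

lemma rhobar_cycWord (S : Finset (ZMod l)) (a : ℕ) :
    rhobar Cb (cycWord k S a) = rhobar Cb (cycWord k S 0) := by
  rw [cycWord, cycWord, rhobar_prod_range_shift hCb _ (cycBlock_add_period k hper S)]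
  simp only [zero_add]

variable [NeZero l]
include ha hd

lemma rhobar_alpha_dm_zseq (a : ℕ) :
    rhobar Cb (am (dm (zseq k a l))) =
      ∑ S : Finset (ZMod l),
        (if ((a + (l - 1) : ℕ) : ZMod l) ∈ S then (S.card : ℚ)⁻¹ else 0) •
          rhobar Cb (cycWord k S 0) := by
  rw [dm_zseq_eq_sum_cycWord k dm hd, map_sum, map_sum]
  refine sum_congr rfl fun S _ => ?_
  split_ifs with hS
  · rw [ha.apply_of_isZMonomial (isZMonomial_cycWord k hS) (card_ne_zero_of_mem hS), map_smul,
      rhobar_cycWord hCb hper]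
  · rw [map_zero, map_zero, zero_smul]

lemma sum_rhobar_alpha_dm_zseq :
    ∑ j ∈ range l, rhobar Cb (am (dm (zseq k j l))) =
      ∑ S : Finset (ZMod l), rhobar Cb (cycWord k S 0) -
        rhobar Cb (cycWord k (∅ : Finset (ZMod l)) 0) := by
  have hcount (S : Finset (ZMod l)) :
      ∑ j ∈ range l, (if ((j + (l - 1) : ℕ) : ZMod l) ∈ S then (S.card : ℚ)⁻¹ else 0) =
        S.card * (S.card : ℚ)⁻¹ := by
    rw [← sum_filter, sum_const, nsmul_eq_mul]
    simp only [Nat.add_comm _ (l - 1), ZMod.card_filter_natCast_add_mem]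
  have hweight (S : Finset (ZMod l)) (v : H) :
      ((S.card : ℚ) * (S.card : ℚ)⁻¹) • v = v - if S = ∅ then v else 0 := by
    rcases eq_or_ne S ∅ with rfl | hS
    · simp
    · have hcard : (S.card : ℚ) ≠ 0 := by simpa [card_eq_zero] using hS
      rw [mul_inv_cancel₀ hcard, one_smul, if_neg hS, sub_zero]
  simp only [rhobar_alpha_dm_zseq hCb ha hd hper]
  rw [sum_comm]
  simp only [← sum_smul, hcount, hweight]
  rw [sum_sub_distrib, sum_ite_eq' univ ∅, if_pos (mem_univ _)]

end Main

/-- For `l ≥ 1` and positive integers `k₁,…,k_l` (indices mod `l`; here `k : ℕ → ℕ`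
with period `l`, `0`-indexed):
`∑_{j=1}^{l} (ρ̄₀ ∘ α ∘ d)(z_{k_j} ⋯ z_{k_{j+l−1}})
  = ∑_{j=1}^{l} ∑_{i=1}^{k_j−1} z_{k_j−i+1} z_{k_{j+1}} ⋯ z_{k_{j+l−1}} z_i
    − (k₁ + ⋯ + k_l) · z_{k₁+⋯+k_l+1}`. -/
theorem rhobar_alpha_d_identity (Cb : ∀ n : ℕ, H →ₗ[ℚ] TensorPower ℚ (n + 2) H)
    (hCb : IsCbar Cb) (am : H →ₗ[ℚ] H) (ha : IsAlpha am) (dm : H →ₗ[ℚ] H) (hd : IsD dm)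
    (l : ℕ) (hl : 1 ≤ l) (k : ℕ → ℕ)
    (hper : ∀ j, k (j + l) = k j) (hpos : ∀ j, 1 ≤ k j) :
    ∑ j ∈ Finset.range l, Mn 0 (Cb 0 (am (dm (zseq k j l)))) =
      (∑ j ∈ Finset.range l, ∑ i ∈ Finset.Icc 1 (k j - 1),
          zw (k j - i + 1) * zseq k (j + 1) (l - 1) * zw i) -
        (∑ j ∈ Finset.range l, k j) • zw ((∑ j ∈ Finset.range l, k j) + 1) := by
  have : NeZero l := ⟨by omega⟩
  change ∑ j ∈ range l, rhobar Cb (am (dm (zseq k j l))) = _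
  rw [sum_rhobar_alpha_dm_zseq hCb ha hd hper, ← map_sum, ← gam_zseq_eq_sum_cycWord,
    rhobar_gam_zseq hCb k hper, cycWord_empty k hpos, rhobar_x_pow hCb]
  simp only [zero_add]
end
end
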